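/- arXiv:2501.03658 — 2 statements merged into one kernel-verified Lean document; each statement's English description precedes it below -/
import Mathlib

section
/- The Riccati equation P'(t) = −η²𝔮²P(t)² − P(t)(2η − 2η𝔮²) + 𝔭², with P(0) = 0, where 𝔭² + 𝔮² = 1 and η > 0, admits a unique global solution on [0,∞), and this solution satisfies P(t) ≥ 0 for all t ≥ 0. -/
/-!
Linearising the Riccati equation (`P = u' / (η² 𝔮² u)`) gives the explicit solution
`P t = 𝔭 (1 - e^{-2η𝔭t}) / (η (1 + 𝔭 + (1 - 𝔭) e^{-2η𝔭t}))`, which is nonnegative for `t ≥ 0`.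
Since the right-hand side is a polynomial, it is Lipschitz on the compact set swept out by any two
solutions over `[0, t]`, so the Lipschitz uniqueness theorem shows every solution equals this one.
-/

open Real Set

theorem ODE_solution_unique_Ici_of_locallyLipschitz {E : Type*} [NormedAddCommGroup E]
    [NormedSpace ℝ E] {F : E → E} {P Q : ℝ → E} {a : ℝ} (hF : LocallyLipschitz F)
    (hP : ∀ t ∈ Ici a, HasDerivWithinAt P (F (P t)) (Ici a) t)
    (hQ : ∀ t ∈ Ici a, HasDerivWithinAt Q (F (Q t)) (Ici a) t) (ha : P a = Q a) :
    EqOn P Q (Ici a) := by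
  intro t ht
  have hPc : ContinuousOn P (Icc a t) := fun s hs =>
    (hP s hs.1).continuousWithinAt.mono Icc_subset_Ici_self
  have hQc : ContinuousOn Q (Icc a t) := fun s hs =>
    (hQ s hs.1).continuousWithinAt.mono Icc_subset_Ici_self
  set S := P '' Icc a t ∪ Q '' Icc a t
  obtain ⟨K, hK⟩ := hF.locallyLipschitzOn.exists_lipschitzOnWith_of_compact
    ((isCompact_Icc.image_of_continuousOn hPc).union (isCompact_Icc.image_of_continuousOn hQc))
  refine ODE_solution_unique_of_mem_Icc_right (v := fun _ => F) (s := fun _ => S)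
    (fun _ _ => hK) hPc (fun s hs => (hP s hs.1).mono (Ici_subset_Ici.2 hs.1))
    (fun s hs => .inl ⟨s, Ico_subset_Icc_self hs, rfl⟩) hQc
    (fun s hs => (hQ s hs.1).mono (Ici_subset_Ici.2 hs.1))
    (fun s hs => .inr ⟨s, Ico_subset_Icc_self hs, rfl⟩) ha ⟨ht, le_rfl⟩

noncomputable def riccatiSolution (η p t : ℝ) : ℝ :=
  p * (1 - exp (-(2 * η * p * t))) / (η * (1 + p + (1 - p) * exp (-(2 * η * p * t))))

section riccatiSolution

variable {η p : ℝ}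

@[simp]
theorem riccatiSolution_zero : riccatiSolution η p 0 = 0 := by
  simp [riccatiSolution]

theorem riccatiSolution_denominator_pos (hη : 0 < η) (hp : 0 < p) {t : ℝ} (ht : 0 ≤ t) :
    0 < 1 + p + (1 - p) * exp (-(2 * η * p * t)) := by
  have he : exp (-(2 * η * p * t)) ≤ 1 := exp_le_one_iff.2 (neg_nonpos.2 (by positivity))
  -- writing `e` for the exponential, this is `(1 + e) + p (1 - e)` with `0 < e ≤ 1`
  nlinarith [exp_pos (-(2 * η * p * t))]

theorem riccatiSolution_nonneg (hη : 0 < η) (hp : 0 < p) {t : ℝ} (ht : 0 ≤ t) :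
    0 ≤ riccatiSolution η p t := by
  have he : exp (-(2 * η * p * t)) ≤ 1 := exp_le_one_iff.2 (neg_nonpos.2 (by positivity))
  have := riccatiSolution_denominator_pos hη hp ht
  unfold riccatiSolution
  exact div_nonneg (mul_nonneg hp.le (by linarith)) (by positivity)

theorem hasDerivAt_riccatiSolution {q t : ℝ} (hη : η ≠ 0) (hpq : p ^ 2 + q ^ 2 = 1)
    (hden : 1 + p + (1 - p) * exp (-(2 * η * p * t)) ≠ 0) :
    HasDerivAt (riccatiSolution η p)
      (-η ^ 2 * q ^ 2 * (riccatiSolution η p t) ^ 2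
        - riccatiSolution η p t * (2 * η - 2 * η * q ^ 2) + p ^ 2) t := by
  have hexp : HasDerivAt (fun s => exp (-(2 * η * p * s)))
      (exp (-(2 * η * p * t)) * -(2 * η * p * 1)) t :=
    ((hasDerivAt_id t).const_mul (2 * η * p)).neg.exp
  have hnum := (hexp.const_sub 1).const_mul p
  have hdenom := ((hexp.const_mul (1 - p)).const_add (1 + p)).const_mul η
  refine (hnum.div hdenom (mul_ne_zero hη hden)).congr_deriv ?_
  rw [show q ^ 2 = 1 - p ^ 2 by linarith]
  unfold riccatiSolution
  generalize exp (-(2 * η * p * t)) = u at hden ⊢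
  rw [mul_comm] at hden
  field_simp
  ring

end riccatiSolution

theorem statement11_general (η pf qf : ℝ) (hη : 0 < η)
    (hpf : 0 < pf)
    (hpq : pf ^ 2 + qf ^ 2 = 1) :
    (∃ P : ℝ → ℝ,
        (P 0 = 0 ∧ ∀ t ∈ Ici (0:ℝ),
          HasDerivWithinAt P
            (-η ^ 2 * qf ^ 2 * (P t) ^ 2 - P t * (2 * η - 2 * η * qf ^ 2) + pf ^ 2)
            (Ici 0) t) ∧
        (∀ Q : ℝ → ℝ,
          (Q 0 = 0 ∧ ∀ t ∈ Ici (0:ℝ),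
            HasDerivWithinAt Q
              (-η ^ 2 * qf ^ 2 * (Q t) ^ 2 - Q t * (2 * η - 2 * η * qf ^ 2) + pf ^ 2)
              (Ici 0) t) →
          ∀ t ∈ Ici (0:ℝ), Q t = P t)) ∧
      ∀ P : ℝ → ℝ,
        (P 0 = 0 ∧ ∀ t ∈ Ici (0:ℝ),
          HasDerivWithinAt P
            (-η ^ 2 * qf ^ 2 * (P t) ^ 2 - P t * (2 * η - 2 * η * qf ^ 2) + pf ^ 2)
            (Ici 0) t) →
        ∀ t ∈ Ici (0:ℝ), 0 ≤ P t := by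
  let F : ℝ → ℝ := fun x => -η ^ 2 * qf ^ 2 * x ^ 2 - x * (2 * η - 2 * η * qf ^ 2) + pf ^ 2
  have hF : LocallyLipschitz F := ContDiff.locallyLipschitz (𝕂 := ℝ) (by fun_prop)
  have hsol : ∀ t ∈ Ici (0:ℝ),
      HasDerivWithinAt (riccatiSolution η pf) (F (riccatiSolution η pf t)) (Ici 0) t := fun t ht =>
    (hasDerivAt_riccatiSolution hη.ne' hpq
      (riccatiSolution_denominator_pos hη hpf ht).ne').hasDerivWithinAt
  have huniq : ∀ Q : ℝ → ℝ, Q 0 = 0 → (∀ t ∈ Ici (0:ℝ), HasDerivWithinAt Q (F (Q t)) (Ici 0) t) →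
      EqOn Q (riccatiSolution η pf) (Ici 0) := fun Q hQ0 hQ =>
    ODE_solution_unique_Ici_of_locallyLipschitz hF hQ hsol (by simp [hQ0])
  refine ⟨⟨riccatiSolution η pf, ⟨riccatiSolution_zero, hsol⟩, fun Q hQ => huniq Q hQ.1 hQ.2⟩,
    fun Q hQ t ht => ?_⟩
  exact huniq Q hQ.1 hQ.2 ht ▸ riccatiSolution_nonneg hη hpf ht

/-- The Riccati equation
`P' = -η²𝔮² P² - P(2η - 2η𝔮²) + 𝔭²`, `P(0) = 0`, with `𝔭² + 𝔮² = 1` and `η > 0`, admits a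
unique global solution on `[0,∞)`, and this solution is nonnegative. -/
theorem statement11 (η pf qf : ℝ) (hη : 0 < η)
    (hpf : 0 < pf) (hpf1 : pf < 1) (hqf : 0 < qf) (hqf1 : qf < 1)
    (hpq : pf ^ 2 + qf ^ 2 = 1) :
    (∃ P : ℝ → ℝ,
        (P 0 = 0 ∧ ∀ t ∈ Ici (0:ℝ),
          HasDerivWithinAt P
            (-η ^ 2 * qf ^ 2 * (P t) ^ 2 - P t * (2 * η - 2 * η * qf ^ 2) + pf ^ 2)
            (Ici 0) t) ∧
        (∀ Q : ℝ → ℝ,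
          (Q 0 = 0 ∧ ∀ t ∈ Ici (0:ℝ),
            HasDerivWithinAt Q
              (-η ^ 2 * qf ^ 2 * (Q t) ^ 2 - Q t * (2 * η - 2 * η * qf ^ 2) + pf ^ 2)
              (Ici 0) t) →
          ∀ t ∈ Ici (0:ℝ), Q t = P t)) ∧
      ∀ P : ℝ → ℝ,
        (P 0 = 0 ∧ ∀ t ∈ Ici (0:ℝ),
          HasDerivWithinAt P
            (-η ^ 2 * qf ^ 2 * (P t) ^ 2 - P t * (2 * η - 2 * η * qf ^ 2) + pf ^ 2)
            (Ici 0) t) →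
        ∀ t ∈ Ici (0:ℝ), 0 ≤ P t :=
  statement11_general η pf qf hη hpf hpq
end

section
/- The Hamiltonian H(q,u,V₁,V₂) = sup_{δ^a ≥ −δ_∞^a}(φ + ψe^{−γ(σ𝔮u ∨ 𝒮⁻)})e^{−kδ^a}(δ^a + V₁)𝟙_{q > q̲} + sup_{δ^b ≥ −δ_∞^b}(φ + ψe^{γ(σ𝔮u ∧ 𝒮⁺)})e^{−kδ^b}(δ^b + V₂)𝟙_{q < q̄} is a continuous function of (q,u,V₁,V₂) ∈ 𝒬 × ℝ³, and the suprema are attained at δ^{a,*} = max(1/k − V₁, −δ_∞^a) and δ^{b,*} = max(1/k − V₂, −δ_∞^b). -/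
/-!
From `e^t ≥ 1 + t`, the map `δ ↦ e^{-kδ} (δ + V)` attains its global maximum at `1/k - V` and
is antitone beyond it, so on `[-δ∞, ∞)` its maximum sits at `max (1/k - V) (-δ∞)`; the intensity
factors in front are nonnegative. The suprema thus have a closed form, continuous in `(u, V₁, V₂)`
for each fixed inventory, which suffices because `ℤ` is discrete.
-/

open Real Set

/-- The Hamiltonian of the market making problem: for inventory `q`, fad value `u` and
value differences `V₁, V₂`, the sum of the suprema over the ask and bid displacements
(each side being switched off at the inventory boundaries `q̲, q̄`). -/
noncomputable def mmHam (k γ σ qf φI ψ Sm Sp δia δib : ℝ) (qlow qhigh : ℤ)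
    (q : ℤ) (u V₁ V₂ : ℝ) : ℝ :=
  (if qlow < q then
      sSup ((fun δa : ℝ => (φI + ψ * Real.exp (-γ * max (σ * qf * u) Sm))
        * Real.exp (-k * δa) * (δa + V₁)) '' Set.Ici (-δia))
    else 0)
  + (if q < qhigh then
      sSup ((fun δb : ℝ => (φI + ψ * Real.exp (γ * min (σ * qf * u) Sp))
        * Real.exp (-k * δb) * (δb + V₂)) '' Set.Ici (-δib))
    else 0)

theorem isMaxOn_Ici_max_of_antitoneOn {α β : Type*} [LinearOrder α] [Preorder β] {g : α → β}
    {c : α} (hmax : IsMaxOn g univ c) (hanti : AntitoneOn g (Ici c)) (a : α) :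
    IsMaxOn g (Ici a) (max c a) := by
  intro x (hx : a ≤ x)
  rcases le_total c a with hca | hac
  · rw [max_eq_right hca]
    exact hanti (mem_Ici.2 hca) (mem_Ici.2 (hca.trans hx)) hx
  · rw [max_eq_left hac]
    exact hmax (mem_univ x)

theorem IsMaxOn.sSup_image_eq {α β : Type*} [ConditionallyCompleteLattice β] {f : α → β}
    {s : Set α} {a : α} (h : IsMaxOn f s a) (ha : a ∈ s) : sSup (f '' s) = f a :=
  IsGreatest.csSup_eq ⟨mem_image_of_mem f ha, forall_mem_image.2 h⟩

section ExpTimesAffine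

variable {k : ℝ} (V : ℝ)

theorem isMaxOn_exp_mul_add (hk : 0 < k) :
    IsMaxOn (fun δ => exp (-k * δ) * (δ + V)) univ (1 / k - V) := by
  intro δ _
  have hexp (t : ℝ) : (t + 1) * exp (-t) ≤ 1 := by
    rw [exp_neg, ← div_eq_mul_inv, div_le_one (exp_pos t)]
    linarith [add_one_le_exp t]
  have hsplit : exp (-k * δ) = exp (-k * (1 / k - V)) * exp (-(k * (δ - (1 / k - V)))) := by
    rw [← exp_add]; ring_nf
  show exp (-k * δ) * (δ + V) ≤ exp (-k * (1 / k - V)) * (1 / k - V + V)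
  calc exp (-k * δ) * (δ + V)
      = exp (-k * (1 / k - V))
          * ((k * (δ - (1 / k - V)) + 1) * exp (-(k * (δ - (1 / k - V))))) / k := by
        rw [hsplit]; field_simp; ring
    _ ≤ exp (-k * (1 / k - V)) * 1 / k := by gcongr; exact hexp _
    _ = _ := by ring

theorem antitoneOn_exp_mul_add (hk : 0 < k) :
    AntitoneOn (fun δ => exp (-k * δ) * (δ + V)) (Ici (1 / k - V)) := by
  intro a (ha : 1 / k - V ≤ a) b _ hab
  have hkaV : 1 ≤ k * (a + V) := by
    rw [← div_le_iff₀' hk]; linarith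
  have hsplit : exp (-k * a) = exp (-k * b) * exp (k * (b - a)) := by
    rw [← exp_add]; ring_nf
  show exp (-k * b) * (b + V) ≤ exp (-k * a) * (a + V)
  rw [hsplit, mul_assoc]
  gcongr
  calc b + V ≤ (a + V) + k * (b - a) * (a + V) := by nlinarith
    _ = (k * (b - a) + 1) * (a + V) := by ring
    _ ≤ exp (k * (b - a)) * (a + V) := by
        gcongr
        · linarith [one_div_pos.2 hk]
        · exact add_one_le_exp _

theorem isMaxOn_const_mul_exp_mul_add (hk : 0 < k) {c : ℝ} (hc : 0 ≤ c) (a : ℝ) :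
    IsMaxOn (fun δ => c * exp (-k * δ) * (δ + V)) (Ici a) (max (1 / k - V) a) := by
  intro δ hδ
  have h := isMaxOn_Ici_max_of_antitoneOn (isMaxOn_exp_mul_add V hk)
    (antitoneOn_exp_mul_add V hk) a hδ
  show c * _ * _ ≤ c * _ * _
  rw [mul_assoc, mul_assoc]
  exact mul_le_mul_of_nonneg_left h hc

theorem sSup_image_const_mul_exp_mul_add (hk : 0 < k) {c : ℝ} (hc : 0 ≤ c) (a : ℝ) :
    sSup ((fun δ => c * exp (-k * δ) * (δ + V)) '' Ici a)
      = c * exp (-k * max (1 / k - V) a) * (max (1 / k - V) a + V) :=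
  (isMaxOn_const_mul_exp_mul_add V hk hc a).sSup_image_eq (mem_Ici.2 (le_max_right _ _))

end ExpTimesAffine

theorem statement16_general (k γ σ qf φI ψ Sm Sp δia δib : ℝ) (qlow qhigh : ℤ)
    (hk : 0 < k) (hφI : 0 ≤ φI) (hψ : 0 ≤ ψ) :
    Continuous (fun x : ℤ × ℝ × ℝ × ℝ =>
        mmHam k γ σ qf φI ψ Sm Sp δia δib qlow qhigh x.1 x.2.1 x.2.2.1 x.2.2.2) ∧
      ∀ (q : ℤ) (u V₁ V₂ : ℝ),
        IsMaxOn (fun δa : ℝ => (φI + ψ * Real.exp (-γ * max (σ * qf * u) Sm))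
            * Real.exp (-k * δa) * (δa + V₁)) (Set.Ici (-δia))
          (max (1 / k - V₁) (-δia)) ∧
        IsMaxOn (fun δb : ℝ => (φI + ψ * Real.exp (γ * min (σ * qf * u) Sp))
            * Real.exp (-k * δb) * (δb + V₂)) (Set.Ici (-δib))
          (max (1 / k - V₂) (-δib)) ∧
        mmHam k γ σ qf φI ψ Sm Sp δia δib qlow qhigh q u V₁ V₂
          = (if qlow < q then
              (φI + ψ * Real.exp (-γ * max (σ * qf * u) Sm))
                * Real.exp (-k * max (1 / k - V₁) (-δia)) * (max (1 / k - V₁) (-δia) + V₁)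
            else 0)
          + (if q < qhigh then
              (φI + ψ * Real.exp (γ * min (σ * qf * u) Sp))
                * Real.exp (-k * max (1 / k - V₂) (-δib)) * (max (1 / k - V₂) (-δib) + V₂)
            else 0) := by
  have hask : ∀ u, 0 ≤ φI + ψ * exp (-γ * max (σ * qf * u) Sm) := fun u => by positivity
  have hbid : ∀ u, 0 ≤ φI + ψ * exp (γ * min (σ * qf * u) Sp) := fun u => by positivity
  have hclosed : ∀ q u V₁ V₂, mmHam k γ σ qf φI ψ Sm Sp δia δib qlow qhigh q u V₁ V₂ = _ :=
    fun q u V₁ V₂ => by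
      rw [mmHam, sSup_image_const_mul_exp_mul_add V₁ hk (hask u),
        sSup_image_const_mul_exp_mul_add V₂ hk (hbid u)]
  refine ⟨?_, fun q u V₁ V₂ => ⟨isMaxOn_const_mul_exp_mul_add V₁ hk (hask u) _,
    isMaxOn_const_mul_exp_mul_add V₂ hk (hbid u) _, hclosed q u V₁ V₂⟩⟩
  simp only [hclosed]
  refine continuous_prod_of_discrete_left.2 fun q => ?_
  by_cases hlow : qlow < q <;> by_cases hhigh : q < qhigh <;>
    simp only [hlow, hhigh, if_true, if_false] <;> fun_prop

/-- The Hamiltonian is a continuous function of `(q,u,V₁,V₂)`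
(with `q` ranging over the discrete set of inventories), and the suprema defining it are
attained at `δᵃ* = max (1/k - V₁) (-δ∞ᵃ)` and `δᵇ* = max (1/k - V₂) (-δ∞ᵇ)`. -/
theorem statement16 (k γ σ qf φI ψ Sm Sp δia δib : ℝ) (qlow qhigh : ℤ)
    (hk : 0 < k) (hγ : 0 < γ) (hσ : 0 < σ) (hqf : 0 < qf) (hqf1 : qf < 1)
    (hφI : 0 ≤ φI) (hψ : 0 ≤ ψ) (hSm : Sm ≤ 0) (hSp : 0 ≤ Sp) (hq : qlow < qhigh) :
    Continuous (fun x : ℤ × ℝ × ℝ × ℝ =>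
        mmHam k γ σ qf φI ψ Sm Sp δia δib qlow qhigh x.1 x.2.1 x.2.2.1 x.2.2.2) ∧
      ∀ (q : ℤ) (u V₁ V₂ : ℝ),
        IsMaxOn (fun δa : ℝ => (φI + ψ * Real.exp (-γ * max (σ * qf * u) Sm))
            * Real.exp (-k * δa) * (δa + V₁)) (Set.Ici (-δia))
          (max (1 / k - V₁) (-δia)) ∧
        IsMaxOn (fun δb : ℝ => (φI + ψ * Real.exp (γ * min (σ * qf * u) Sp))
            * Real.exp (-k * δb) * (δb + V₂)) (Set.Ici (-δib))
          (max (1 / k - V₂) (-δib)) ∧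
        mmHam k γ σ qf φI ψ Sm Sp δia δib qlow qhigh q u V₁ V₂
          = (if qlow < q then
              (φI + ψ * Real.exp (-γ * max (σ * qf * u) Sm))
                * Real.exp (-k * max (1 / k - V₁) (-δia)) * (max (1 / k - V₁) (-δia) + V₁)
            else 0)
          + (if q < qhigh then
              (φI + ψ * Real.exp (γ * min (σ * qf * u) Sp))
                * Real.exp (-k * max (1 / k - V₂) (-δib)) * (max (1 / k - V₂) (-δib) + V₂)
            else 0) :=
  statement16_general k γ σ qf φI ψ Sm Sp δia δib qlow qhigh hk hφI hψ
end
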